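/- arXiv:1603.02668 — 2 statements merged into one kernel-verified Lean document; each statement's English description precedes it below -/
import Mathlib

section
/- For every holomorphic function f on the unit disk with 0 < |f(z)| ≤ 1 for all z (i.e., f maps the disk into the punctured closed unit disk and is nonvanishing), the first Taylor coefficient satisfies |f'(0)| ≤ 2/e. -/
/-!
Since `f` has no zeros on the disc, it has a holomorphic logarithm `g` (a primitive of `f'/f`,
suitably normalised), and `|f| ≤ 1` means `Re g ≤ 0`. If `a = -Re g(0) > 0`, the Cayley map
`w ↦ (w - g(0)) / (w + conj g(0))` sends the closed left half-plane into the closed unit disc and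
`g(0)` to `0`, so Schwarz's lemma gives `|g'(0)| ≤ 2a`. Hence `|f'(0)| = e^{-a} |g'(0)| ≤ 2a e^{-a}`,
and `x e^{-x} ≤ 1/e`. If instead `|f(0)| = 1`, then `f` is constant by the maximum modulus principle.
-/

open Complex ComplexConjugate Metric Set Filter Topology

theorem Real.neg_mul_exp_le_exp_neg_one (x : ℝ) : -x * Real.exp x ≤ Real.exp (-1) := by
  have := Real.add_one_le_exp (-x - 1)
  calc -x * Real.exp x ≤ Real.exp (-x - 1) * Real.exp x := by gcongr; linarith
    _ = Real.exp (-1) := by rw [← Real.exp_add]; ring_nf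

namespace Complex

theorem exists_differentiableOn_exp_comp_eqOn_ball {f : ℂ → ℂ} {c : ℂ} {r : ℝ}
    (hf : DifferentiableOn ℂ f (ball c r)) (hf₀ : ∀ z ∈ ball c r, f z ≠ 0) :
    ∃ g : ℂ → ℂ, DifferentiableOn ℂ g (ball c r) ∧ EqOn (exp ∘ g) f (ball c r) := by
  have hlog : DifferentiableOn ℂ (logDeriv f) (ball c r) :=
    (hf.deriv isOpen_ball).div hf hf₀
  obtain ⟨G, hG⟩ := hlog.isExactOn_ball
  have hGd : DifferentiableOn ℂ G (ball c r) := fun z hz ↦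
    (hG z hz).differentiableAt.differentiableWithinAt
  have hlogEq : EqOn (logDeriv f) (logDeriv (exp ∘ G)) (ball c r) := fun z hz ↦ by
    rw [logDeriv_comp differentiableAt_exp (hG z hz).differentiableAt, logDeriv_exp,
      (hG z hz).deriv, Pi.one_apply, one_mul]
  obtain ⟨a, ha, hfa⟩ := (logDeriv_eqOn_iff hf (differentiable_exp.comp_differentiableOn hGd)
    isOpen_ball (convex_ball c r).isPreconnected (fun _ _ ↦ exp_ne_zero _) hf₀).mp hlogEq
  refine ⟨fun z ↦ G z + log a, hGd.add_const _, fun z hz ↦ ?_⟩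
  simp [hfa hz, exp_add, exp_log ha, mul_comm]

theorem deriv_eq_zero_of_isLocalMax_norm {f : ℂ → ℂ} {c : ℂ}
    (hd : ∀ᶠ z in 𝓝 c, DifferentiableAt ℂ f z) (hc : IsLocalMax (norm ∘ f) c) :
    deriv f c = 0 := by
  have hconst : f =ᶠ[𝓝 c] fun _ ↦ f c := eventually_eq_of_isLocalMax_norm hd hc
  rw [hconst.deriv_eq, deriv_const]

theorem norm_sub_le_norm_add_conj {w a : ℂ} (hw : w.re ≤ 0) (ha : a.re ≤ 0) :
    ‖w - a‖ ≤ ‖w + conj a‖ := by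
  rw [norm_def, norm_def]
  gcongr
  simp only [normSq_apply, sub_re, sub_im, add_re, add_im, conj_re, conj_im]
  nlinarith [mul_nonneg_of_nonpos_of_nonpos hw ha]

theorem norm_deriv_le_of_re_nonpos {g : ℂ → ℂ} {c : ℂ} {R : ℝ}
    (hg : DifferentiableOn ℂ g (ball c R)) (hre : ∀ z ∈ ball c R, (g z).re ≤ 0)
    (hc : (g c).re < 0) (hR : 0 < R) :
    ‖deriv g c‖ ≤ -2 * (g c).re / R := by
  have hden : ∀ z ∈ ball c R, g z + conj (g c) ≠ 0 := fun z hz h ↦ by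
    have := congrArg re h
    simp only [add_re, conj_re, zero_re] at this
    linarith [hre z hz]
  set φ : ℂ → ℂ := fun z ↦ (g z - g c) / (g z + conj (g c))
  have hφ : DifferentiableOn ℂ φ (ball c R) :=
    (hg.sub_const _).div (hg.add_const _) hden
  have hmaps : MapsTo φ (ball c R) (closedBall (φ c) 1) := fun z hz ↦ by
    rw [mem_closedBall, dist_eq_norm]
    simp only [φ, sub_self, zero_div, sub_zero, norm_div]
    exact div_le_one_of_le₀ (norm_sub_le_norm_add_conj (hre z hz) hc.le) (norm_nonneg _)
  have hc_mem : c ∈ ball c R := mem_ball_self hR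
  have hgc := (hg.differentiableAt (isOpen_ball.mem_nhds hc_mem)).hasDerivAt
  have hφc : deriv φ c = deriv g c / (2 * (g c).re) := by
    have hφ' : HasDerivAt φ _ c := (hgc.sub_const (g c)).div (hgc.add_const _) (hden c hc_mem)
    have h2re : (2 * (g c).re : ℂ) ≠ 0 := by exact_mod_cast (by linarith : 2 * (g c).re ≠ 0)
    rw [hφ'.deriv, sub_self, zero_mul, sub_zero, add_conj, sq, ofReal_mul, ofReal_ofNat,
      mul_div_mul_right _ _ h2re]
  have := norm_deriv_le_div_of_mapsTo_ball hφ hmaps hR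
  rw [hφc, norm_div, norm_mul, norm_real, Real.norm_eq_abs, abs_of_neg hc, RCLike.norm_ofNat,
    div_le_div_iff₀ (by linarith) hR] at this
  rw [le_div_iff₀ hR]
  linarith

end Complex

theorem krzyz_first_coeff_bound (f : ℂ → ℂ)
    (hf : DifferentiableOn ℂ f (ball (0:ℂ) 1))
    (hne : ∀ z ∈ ball (0:ℂ) 1, f z ≠ 0)
    (hb : ∀ z ∈ ball (0:ℂ) 1, ‖f z‖ ≤ 1) :
    ‖deriv f 0‖ ≤ 2 / Real.exp 1 := by
  have h0 : (0:ℂ) ∈ ball (0:ℂ) 1 := mem_ball_self one_pos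
  have hnhds : ball (0:ℂ) 1 ∈ 𝓝 0 := isOpen_ball.mem_nhds h0
  rcases (hb 0 h0).lt_or_eq with hlt | heq
  · obtain ⟨g, hg, hfg⟩ := exists_differentiableOn_exp_comp_eqOn_ball hf hne
    have hre : ∀ z ∈ ball (0:ℂ) 1, (g z).re ≤ 0 := fun z hz ↦ by
      simpa [← hfg hz, norm_exp] using hb z hz
    have hre₀ : (g 0).re < 0 := by simpa [← hfg h0, norm_exp] using hlt
    have hderiv : deriv f 0 = exp (g 0) * deriv g 0 := by
      rw [← (hfg.eventuallyEq_of_mem hnhds).deriv_eq]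
      exact deriv_cexp (hg.differentiableAt hnhds)
    calc ‖deriv f 0‖ = Real.exp (g 0).re * ‖deriv g 0‖ := by rw [hderiv, norm_mul, norm_exp]
      _ ≤ Real.exp (g 0).re * (-2 * (g 0).re) := by
        gcongr
        simpa using norm_deriv_le_of_re_nonpos hg hre hre₀ one_pos
      _ = 2 * (-(g 0).re * Real.exp (g 0).re) := by ring
      _ ≤ 2 * Real.exp (-1) := by grw [Real.neg_mul_exp_le_exp_neg_one]
      _ = 2 / Real.exp 1 := by rw [Real.exp_neg, div_eq_mul_inv]
  · have hmax : IsLocalMax (norm ∘ f) 0 :=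
      Filter.mem_of_superset hnhds fun z hz ↦ (hb z hz).trans heq.ge
    rw [deriv_eq_zero_of_isLocalMax_norm (hf.eventually_differentiableAt hnhds) hmax, norm_zero]
    positivity
end

section
/- (Golusin's improvement of Schwarz's lemma) If f : 𝔻 → 𝔻 is holomorphic with a zero of order m ≥ 1 at the origin, and c_m = f^{(m)}(0)/m! is the leading Taylor coefficient, then for all t ∈ 𝔻: |f(t)| ≤ |t|^m · (|t| + |c_m|)/(1 + |c_m|·|t|). -/
/-!
Write `f t = t ^ m * g t` with `g = (swap dslope 0)^[m] f`, the `m`-th iterated difference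
quotient at `0`; then `g 0 = c_m`, and applying the Schwarz lemma `m` times shows that `g` maps the
disk into the closed disk. If `‖g 0‖ < 1`, composing `g` with the disk automorphism
`w ↦ (w - a) / (1 - conj a * w)`, `a = g 0`, gives a self-map of the disk fixing `0`, so by the
Schwarz lemma once more the pseudo-hyperbolic distance from `g t` to `a` is at most `‖t‖`,
which forces `‖g t‖ ≤ (‖t‖ + ‖a‖) / (1 + ‖a‖ * ‖t‖)`.
-/

open Complex Metric Nat Function Set ComplexConjugate

section IterateDslope

variable {𝕜 E : Type*} [NontriviallyNormedField 𝕜] [NormedAddCommGroup E] [NormedSpace 𝕜 E]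
  {f : 𝕜 → E} {c : 𝕜}

theorem AnalyticAt.iterate_dslope_apply_self [CharZero 𝕜] [CompleteSpace E] (hf : AnalyticAt 𝕜 f c)
    (k : ℕ) : (swap dslope c)^[k] f c = (k ! : 𝕜)⁻¹ • iteratedDeriv k f c := by
  obtain ⟨p, hp⟩ := hf
  have ⟨r, hr⟩ := hp
  rw [eq_inv_smul_iff₀ (by exact_mod_cast k.factorial_ne_zero), iteratedDeriv_eq_iteratedFDeriv,
    ← hr.factorial_smul 1 k, ← (hp.has_fpower_series_iterate_dslope_fslope k).coeff_zero 1,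
    Nat.cast_smul_eq_nsmul]
  exact congrArg _
    ((FormalMultilinearSeries.coeff_iterate_fslope k 0).trans (by rw [zero_add]; rfl))

end IterateDslope

section ComplexDslope

variable {E : Type*} [NormedAddCommGroup E] [NormedSpace ℂ E] {f : ℂ → E} {c : ℂ}

theorem DifferentiableOn.iterate_dslope [CompleteSpace E] {s : Set ℂ} (hs : s ∈ nhds c)
    (hf : DifferentiableOn ℂ f s) (k : ℕ) : DifferentiableOn ℂ ((swap dslope c)^[k] f) s := by
  induction k with
  | zero => exact hf
  | succ k ih => rw [iterate_succ_apply']; exact (differentiableOn_dslope hs).2 ih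

theorem Complex.mapsTo_iterate_dslope_closedBall [CompleteSpace E] {R M : ℝ} {m : ℕ}
    (hf : DifferentiableOn ℂ f (ball c R)) (hmaps : MapsTo f (ball c R) (closedBall 0 M))
    (hzero : ∀ k < m, (swap dslope c)^[k] f c = 0) :
    MapsTo ((swap dslope c)^[m] f) (ball c R) (closedBall 0 (M / R ^ m)) := by
  induction m with
  | zero => simpa using hmaps
  | succ m ih =>
    intro z hz
    have hcentre : closedBall (0 : E) (M / R ^ m) =
        closedBall ((swap dslope c)^[m] f c) (M / R ^ m) := by
      rw [hzero m m.lt_succ_self]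
    have hm := hcentre ▸ ih fun k hk => hzero k (Nat.lt_succ_of_lt hk)
    rw [mem_closedBall_zero_iff, pow_succ, ← div_div, iterate_succ_apply']
    exact norm_dslope_le_div_of_mapsTo_ball
      (hf.iterate_dslope (ball_mem_nhds c (pos_of_mem_ball hz)) m) hm hz

end ComplexDslope

namespace Complex

theorem norm_one_sub_conj_mul_sq_sub_norm_sub_sq (a w : ℂ) :
    ‖1 - conj a * w‖ ^ 2 - ‖w - a‖ ^ 2 = (1 - ‖a‖ ^ 2) * (1 - ‖w‖ ^ 2) := by
  simp only [Complex.sq_norm, normSq_apply, sub_re, sub_im, mul_re, mul_im, conj_re, conj_im,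
    one_re, one_im]
  ring

theorem one_sub_conj_mul_ne_zero {a w : ℂ} (ha : ‖a‖ < 1) (hw : ‖w‖ ≤ 1) :
    1 - conj a * w ≠ 0 := by
  have hlt : ‖conj a * w‖ < 1 := by
    rw [norm_mul, norm_conj]
    exact mul_lt_one_of_nonneg_of_lt_one_left (norm_nonneg a) ha hw
  intro h
  rw [← sub_eq_zero.1 h, norm_one] at hlt
  exact hlt.false

theorem norm_sub_div_one_sub_conj_mul_le_one {a w : ℂ} (ha : ‖a‖ < 1) (hw : ‖w‖ ≤ 1) :
    ‖(w - a) / (1 - conj a * w)‖ ≤ 1 := by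
  rw [norm_div, div_le_one (norm_pos_iff.2 (one_sub_conj_mul_ne_zero ha hw)),
    ← pow_le_pow_iff_left₀ (norm_nonneg _) (norm_nonneg _) two_ne_zero, ← sub_nonneg,
    norm_one_sub_conj_mul_sq_sub_norm_sub_sq]
  have ha' : ‖a‖ ^ 2 ≤ 1 := pow_le_one₀ (norm_nonneg a) ha.le
  have hw' : ‖w‖ ^ 2 ≤ 1 := pow_le_one₀ (norm_nonneg w) hw
  exact mul_nonneg (sub_nonneg.2 ha') (sub_nonneg.2 hw')

theorem norm_le_of_norm_sub_le_mul_norm_one_sub_conj_mul {a w : ℂ} {r : ℝ}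
    (ha : ‖a‖ < 1) (hw : ‖w‖ ≤ 1) (hr₀ : 0 ≤ r) (hr₁ : r < 1)
    (h : ‖w - a‖ ≤ r * ‖1 - conj a * w‖) :
    ‖w‖ ≤ (r + ‖a‖) / (1 + ‖a‖ * r) := by
  have hid := norm_one_sub_conj_mul_sq_sub_norm_sub_sq a w
  have hD : 1 - ‖a‖ * ‖w‖ ≤ ‖1 - conj a * w‖ := by
    simpa [norm_mul] using norm_sub_norm_le (1 : ℂ) (conj a * w)
  set A := ‖a‖
  set x := ‖w‖
  set D := ‖1 - conj a * w‖
  have hA₀ : 0 ≤ A := norm_nonneg a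
  have hx₀ : 0 ≤ x := norm_nonneg w
  have hAx : 0 ≤ 1 - A * x := by nlinarith
  -- `(1 - r²)(1 - ‖a‖‖w‖)² ≤ (1 - r²)‖1 - conj a * w‖² ≤ (1 - ‖a‖²)(1 - ‖w‖²)` is a quadratic
  -- inequality in `‖w‖`, with roots `(‖a‖ + r) / (1 + r‖a‖)` and `(‖a‖ - r) / (1 - r‖a‖)`.
  have hQ : ((1 + r * A) * x - (A + r)) * ((1 - r * A) * x - (A - r)) ≤ 0 := by
    have h₁ : (1 - A * x) ^ 2 ≤ D ^ 2 := pow_le_pow_left₀ hAx hD 2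
    have h₂ : ‖w - a‖ ^ 2 ≤ r ^ 2 * D ^ 2 := by
      rw [← mul_pow]; exact pow_le_pow_left₀ (norm_nonneg _) h 2
    nlinarith [mul_le_mul_of_nonneg_left h₁ (by nlinarith : (0:ℝ) ≤ 1 - r ^ 2)]
  rw [le_div_iff₀ (by positivity)]
  by_contra! hP
  have hrA : 0 < 1 - r * A := by nlinarith
  have hP' : 0 < (1 + r * A) * x - (A + r) := by linarith
  nlinarith [mul_nonpos_of_nonneg_of_nonpos (by positivity : (0:ℝ) ≤ 1 + r * A) hQ,
    mul_pos hrA (mul_pos hP' hP'),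
    mul_nonneg hP'.le (mul_nonneg hr₀ (by nlinarith : (0:ℝ) ≤ 1 - A ^ 2))]

theorem norm_le_div_of_mapsTo_ball_closedBall {g : ℂ → ℂ}
    (hd : DifferentiableOn ℂ g (ball 0 1)) (hmaps : MapsTo g (ball 0 1) (closedBall 0 1))
    {z : ℂ} (hz : z ∈ ball 0 1) :
    ‖g z‖ ≤ (‖z‖ + ‖g 0‖) / (1 + ‖g 0‖ * ‖z‖) := by
  have hbound : ∀ w ∈ ball (0 : ℂ) 1, ‖g w‖ ≤ 1 := fun w hw => mem_closedBall_zero_iff.1 (hmaps hw)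
  have hz₁ : ‖z‖ < 1 := mem_ball_zero_iff.1 hz
  rcases (hbound 0 (mem_ball_self one_pos)).eq_or_lt with hg₀ | hg₀
  · rw [hg₀, one_mul, add_comm, div_self (by positivity)]
    exact hbound z hz
  set a := g 0
  have hne : ∀ w ∈ ball (0 : ℂ) 1, 1 - conj a * g w ≠ 0 := fun w hw =>
    one_sub_conj_mul_ne_zero hg₀ (hbound w hw)
  have hschwarz : ‖(g z - a) / (1 - conj a * g z)‖ ≤ ‖z‖ :=
    norm_le_norm_of_mapsTo_ball (f := fun w => (g w - a) / (1 - conj a * g w))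
      ((hd.sub_const a).div ((differentiableOn_const 1).sub (hd.const_mul _)) hne)
      (fun w hw => mem_closedBall_zero_iff.2
        (norm_sub_div_one_sub_conj_mul_le_one hg₀ (hbound w hw)))
      (by simp [a]) hz₁
  rw [norm_div, div_le_iff₀ (norm_pos_iff.2 (hne z hz))] at hschwarz
  exact norm_le_of_norm_sub_le_mul_norm_one_sub_conj_mul hg₀ (hbound z hz) (norm_nonneg z) hz₁
    hschwarz

end Complex

theorem golusin_schwarz_general (f : ℂ → ℂ) (m : ℕ)
    (hf : DifferentiableOn ℂ f (ball (0:ℂ) 1))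
    (hb : ∀ z ∈ ball (0:ℂ) 1, ‖f z‖ < 1)
    (hzero : ∀ k < m, iteratedDeriv k f 0 = 0) :
    ∀ t ∈ ball (0:ℂ) 1,
      ‖f t‖ ≤ ‖t‖ ^ m *
        ((‖t‖ + ‖iteratedDeriv m f 0 / (m ! : ℂ)‖) /
          (1 + ‖iteratedDeriv m f 0 / (m ! : ℂ)‖ * ‖t‖)) := by
  intro t ht
  have hball : ball (0 : ℂ) 1 ∈ nhds 0 := ball_mem_nhds 0 one_pos
  set g := (swap dslope 0)^[m] f
  have hcoeff := (hf.analyticAt hball).iterate_dslope_apply_self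
  have hvanish : ∀ k < m, (swap dslope 0)^[k] f 0 = 0 := fun k hk => by
    rw [hcoeff, hzero k hk, smul_zero]
  have hfg : f t = t ^ m * g t := by
    simpa using (pow_sub_smul_iterate_dslope_of_zero m hvanish t).symm
  have hg₀ : iteratedDeriv m f 0 / (m ! : ℂ) = g 0 := by
    rw [← inv_mul_eq_div, ← smul_eq_mul]
    exact (hcoeff m).symm
  have hmaps : MapsTo g (ball 0 1) (closedBall 0 1) := by
    simpa using mapsTo_iterate_dslope_closedBall hf
      (fun z hz => mem_closedBall_zero_iff.2 (hb z hz).le) hvanish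
  rw [hfg, norm_mul, norm_pow, hg₀]
  exact mul_le_mul_of_nonneg_left
    (norm_le_div_of_mapsTo_ball_closedBall (hf.iterate_dslope hball m) hmaps ht) (by positivity)

theorem golusin_schwarz (f : ℂ → ℂ) (m : ℕ) (hm : 1 ≤ m)
    (hf : DifferentiableOn ℂ f (ball (0:ℂ) 1))
    (hb : ∀ z ∈ ball (0:ℂ) 1, ‖f z‖ < 1)
    (hzero : ∀ k < m, iteratedDeriv k f 0 = 0) :
    ∀ t ∈ ball (0:ℂ) 1,
      ‖f t‖ ≤ ‖t‖ ^ m *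
        ((‖t‖ + ‖iteratedDeriv m f 0 / (m ! : ℂ)‖) /
          (1 + ‖iteratedDeriv m f 0 / (m ! : ℂ)‖ * ‖t‖)) :=
  golusin_schwarz_general f m hf hb hzero
end
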